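/- Let I ⊆ ℝ be an open interval and c: I → (0,∞) a smooth function. A smooth function Λ = Λ(t,x,u,v,w), defined for (t,x) ∈ ℝ², u ∈ I, (v,w) ∈ ℝ², satisfies the first-order linear partial differential equation c'(u)·(v·∂Λ/∂v + w·∂Λ/∂w − Λ) = 2·c(u)·∂Λ/∂u identically if and only if there exists a smooth function f = f(t,x,α,β) on ℝ⁴ such that Λ(t,x,u,v,w) = c(u)^{-1/2}·f(t, x, c(u)^{1/2}·v, c(u)^{1/2}·w) for all (t,x,u,v,w). -/

import Mathlib

/-!
Put `α = √c v`, `β = √c w` and `g(u, α, β) = √c · Λ(u, α/√c, β/√c)`. Along each line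
`α, β = const` the chain rule gives `2√c · ∂g/∂u = 2c Λ_u − c'(vΛ_v + wΛ_w − Λ)`, so the
equation says exactly that `g` does not depend on `u`. On the interval `I` this is the same as
`g(u, α, β) = f(α, β)`, i.e. `Λ = c^{-1/2} f(√c v, √c w)`.
-/

noncomputable section

/-- Smoothness of a function of five real variables, on the set where the
third variable (the value of u) lies in `I`. -/
def SmoothOn5 (I : Set ℝ) (Λ : ℝ → ℝ → ℝ → ℝ → ℝ → ℝ) : Prop :=
  ContDiffOn ℝ (⊤ : ℕ∞)
    (fun v : ℝ × ℝ × ℝ × ℝ × ℝ => Λ v.1 v.2.1 v.2.2.1 v.2.2.2.1 v.2.2.2.2)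
    {v : ℝ × ℝ × ℝ × ℝ × ℝ | v.2.2.1 ∈ I}

/-- Smoothness of a function of four real variables. -/
def Smooth4 (f : ℝ → ℝ → ℝ → ℝ → ℝ) : Prop :=
  ContDiff ℝ (⊤ : ℕ∞)
    (fun v : ℝ × ℝ × ℝ × ℝ => f v.1 v.2.1 v.2.2.1 v.2.2.2)

section ChainRule

variable {𝕜 E : Type*} [NontriviallyNormedField 𝕜] [NormedAddCommGroup E] [NormedSpace 𝕜 E]

theorem DifferentiableAt.hasDerivAt_comp₃ {F : 𝕜 × 𝕜 × 𝕜 → E} {a b d : 𝕜 → 𝕜}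
    {a' b' d' r : 𝕜} (hF : DifferentiableAt 𝕜 F (a r, b r, d r)) (ha : HasDerivAt a a' r)
    (hb : HasDerivAt b b' r) (hd : HasDerivAt d d' r) :
    HasDerivAt (fun r => F (a r, b r, d r))
      (a' • deriv (fun s => F (s, b r, d r)) (a r) + b' • deriv (fun s => F (a r, s, d r)) (b r)
        + d' • deriv (fun s => F (a r, b r, s)) (d r)) r := by
  set L := fderiv 𝕜 F (a r, b r, d r)
  have hL := hF.hasFDerivAt
  have h₁ : deriv (fun s => F (s, b r, d r)) (a r) = L (1, 0, 0) :=
    (hL.comp_hasDerivAt _ <| (hasDerivAt_id _).prodMk <|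
      (hasDerivAt_const _ _).prodMk (hasDerivAt_const _ _)).deriv
  have h₂ : deriv (fun s => F (a r, s, d r)) (b r) = L (0, 1, 0) :=
    (hL.comp_hasDerivAt _ <| (hasDerivAt_const _ _).prodMk <|
      (hasDerivAt_id _).prodMk (hasDerivAt_const _ _)).deriv
  have h₃ : deriv (fun s => F (a r, b r, s)) (d r) = L (0, 0, 1) :=
    (hL.comp_hasDerivAt _ <| (hasDerivAt_const _ _).prodMk <|
      (hasDerivAt_const _ _).prodMk (hasDerivAt_id _)).deriv
  have hsplit : ((a', b', d') : 𝕜 × 𝕜 × 𝕜) = a' • (1, 0, 0) + b' • (0, 1, 0) + d' • (0, 0, 1) := by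
    simp
  rw [h₁, h₂, h₃, ← map_smul, ← map_smul, ← map_smul, ← map_add, ← map_add, ← hsplit]
  exact hL.comp_hasDerivAt r (ha.prodMk (hb.prodMk hd))

end ChainRule

namespace WaveMultiplier

open Real Filter Topology

def defect (c : ℝ → ℝ) (L : ℝ → ℝ → ℝ → ℝ) (u v w : ℝ) : ℝ :=
  2 * c u * deriv (fun s => L s v w) u
    - deriv c u * (v * deriv (fun s => L u s w) v + w * deriv (fun s => L u v s) w - L u v w)

def rescaled (c : ℝ → ℝ) (L : ℝ → ℝ → ℝ → ℝ) (u α β : ℝ) : ℝ :=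
  √(c u) * L u (α / √(c u)) (β / √(c u))

theorem rescaled_sqrt_mul {c : ℝ → ℝ} {u : ℝ} (hcu : 0 < c u) (L : ℝ → ℝ → ℝ → ℝ) (v w : ℝ) :
    rescaled c L u (√(c u) * v) (√(c u) * w) = √(c u) * L u v w := by
  have hS : √(c u) ≠ 0 := (sqrt_pos.mpr hcu).ne'
  simp only [rescaled, mul_div_cancel_left₀ _ hS]

theorem hasDerivAt_rescaled {c : ℝ → ℝ} {u : ℝ} (hc : DifferentiableAt ℝ c u) (hcu : 0 < c u)
    {L : ℝ → ℝ → ℝ → ℝ} {α β : ℝ}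
    (hL : DifferentiableAt ℝ (fun p : ℝ × ℝ × ℝ => L p.1 p.2.1 p.2.2)
      (u, α / √(c u), β / √(c u))) :
    HasDerivAt (fun r => rescaled c L r α β)
      ((2 * √(c u))⁻¹ * defect c L u (α / √(c u)) (β / √(c u))) u := by
  have hS : √(c u) ≠ 0 := (sqrt_pos.mpr hcu).ne'
  have hSd : HasDerivAt (fun r => √(c r)) (deriv c u / (2 * √(c u))) u :=
    hc.hasDerivAt.sqrt hcu.ne'
  have hα : HasDerivAt (fun r => α / √(c r)) _ u := (hasDerivAt_const u α).fun_div hSd hS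
  have hβ : HasDerivAt (fun r => β / √(c r)) _ u := (hasDerivAt_const u β).fun_div hSd hS
  refine (hSd.mul (hL.hasDerivAt_comp₃ (hasDerivAt_id' u) hα hβ)).congr_deriv ?_
  have hS2 : c u = √(c u) ^ 2 := (sq_sqrt hcu.le).symm
  simp only [defect, smul_eq_mul, one_mul]
  generalize √(c u) = S at *
  rw [hS2]
  field_simp
  ring

theorem rescaled_eq_of_defect_eq_zero {I : Set ℝ} (hIo : IsOpen I) (hIc : IsPreconnected I)
    {c : ℝ → ℝ} (hc : ∀ u ∈ I, DifferentiableAt ℝ c u) (hcpos : ∀ u ∈ I, 0 < c u)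
    {L : ℝ → ℝ → ℝ → ℝ}
    (hL : ∀ u ∈ I, ∀ v w, DifferentiableAt ℝ (fun p : ℝ × ℝ × ℝ => L p.1 p.2.1 p.2.2) (u, v, w))
    (hdefect : ∀ u ∈ I, ∀ v w, defect c L u v w = 0) {u u₀ : ℝ} (hu : u ∈ I) (hu₀ : u₀ ∈ I)
    (α β : ℝ) : rescaled c L u α β = rescaled c L u₀ α β := by
  have hderiv (r) (hr : r ∈ I) := hasDerivAt_rescaled (α := α) (β := β) (hc r hr) (hcpos r hr)
    (hL r hr _ _)
  refine hIo.is_const_of_deriv_eq_zero hIc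
    (fun r hr => (hderiv r hr).differentiableAt.differentiableWithinAt) (fun r hr => ?_) hu hu₀
  rw [(hderiv r hr).deriv, hdefect r hr, mul_zero, Pi.zero_apply]

theorem defect_eq_zero_of_eq_inv_sqrt_mul {I : Set ℝ} (hIo : IsOpen I) {c : ℝ → ℝ}
    (hcpos : ∀ u ∈ I, 0 < c u) {L : ℝ → ℝ → ℝ → ℝ} {g : ℝ → ℝ → ℝ}
    (hLg : ∀ u ∈ I, ∀ v w, L u v w = (√(c u))⁻¹ * g (√(c u) * v) (√(c u) * w))
    {u v w : ℝ} (hu : u ∈ I) (hc : DifferentiableAt ℝ c u)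
    (hL : DifferentiableAt ℝ (fun p : ℝ × ℝ × ℝ => L p.1 p.2.1 p.2.2) (u, v, w)) :
    defect c L u v w = 0 := by
  have hS : √(c u) ≠ 0 := (sqrt_pos.mpr (hcpos u hu)).ne'
  set α := √(c u) * v
  set β := √(c u) * w
  have hv : α / √(c u) = v := mul_div_cancel_left₀ v hS
  have hw : β / √(c u) = w := mul_div_cancel_left₀ w hS
  have hconst : (fun r => rescaled c L r α β) =ᶠ[𝓝 u] fun _ => g α β := by
    filter_upwards [hIo.mem_nhds hu] with r hr
    have hSr : √(c r) ≠ 0 := (sqrt_pos.mpr (hcpos r hr)).ne'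
    simp only [rescaled, hLg r hr, mul_div_cancel₀ _ hSr, mul_inv_cancel_left₀ hSr]
  have hzero := (hasDerivAt_const u (g α β)).congr_of_eventuallyEq hconst
  have hderiv := hasDerivAt_rescaled hc (hcpos u hu) (hv ▸ hw ▸ hL)
  rw [hv, hw] at hderiv
  simpa [hS] using hderiv.unique hzero

theorem _root_.SmoothOn5.differentiableAt_slice {I : Set ℝ} (hIo : IsOpen I)
    {Λ : ℝ → ℝ → ℝ → ℝ → ℝ → ℝ} (hΛ : SmoothOn5 I Λ) (t x u : ℝ) (hu : u ∈ I) (v w : ℝ) :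
    DifferentiableAt ℝ (fun p : ℝ × ℝ × ℝ => Λ t x p.1 p.2.1 p.2.2) (u, v, w) := by
  have hopen : IsOpen {p : ℝ × ℝ × ℝ × ℝ × ℝ | p.2.2.1 ∈ I} :=
    hIo.preimage (by fun_prop)
  have hdiff := (hΛ.contDiffAt (hopen.mem_nhds (x := (t, x, u, v, w)) hu)).differentiableAt
    (by simp)
  exact hdiff.comp (u, v, w) (by fun_prop : DifferentiableAt ℝ
    (fun p : ℝ × ℝ × ℝ => ((t, x, p.1, p.2.1, p.2.2) : ℝ × ℝ × ℝ × ℝ × ℝ)) (u, v, w))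

theorem _root_.SmoothOn5.smooth4_rescaled {I : Set ℝ} {Λ : ℝ → ℝ → ℝ → ℝ → ℝ → ℝ}
    (hΛ : SmoothOn5 I Λ) (c : ℝ → ℝ) {u₀ : ℝ} (hu₀ : u₀ ∈ I) :
    Smooth4 (fun t x => rescaled c (Λ t x) u₀) := by
  have hslice : ContDiff ℝ (⊤ : ℕ∞) fun q : ℝ × ℝ × ℝ × ℝ =>
      Λ q.1 q.2.1 u₀ (q.2.2.1 / √(c u₀)) (q.2.2.2 / √(c u₀)) :=
    contDiffOn_univ.mp <| hΛ.comp (f := fun q : ℝ × ℝ × ℝ × ℝ =>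
      (q.1, q.2.1, u₀, q.2.2.1 / √(c u₀), q.2.2.2 / √(c u₀))) (by fun_prop) fun _ _ => hu₀
  exact contDiff_const.mul hslice

end WaveMultiplier

open WaveMultiplier

/-- A smooth `Λ(t,x,u,v,w)` (with `u` ranging in the open interval `I` on
which the wave speed `c` is smooth and positive) satisfies
`c'(u)·(v·Λ_v + w·Λ_w − Λ) = 2c(u)·Λ_u` identically iff
`Λ = c(u)^{-1/2}·f(t,x,c(u)^{1/2}·v,c(u)^{1/2}·w)` for some smooth `f` on ℝ⁴. -/
theorem wave_multiplier_characteristic_form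
    (I : Set ℝ) (hIo : IsOpen I) (hIc : IsPreconnected I)
    (c : ℝ → ℝ) (hc : ContDiffOn ℝ (⊤ : ℕ∞) c I) (hcpos : ∀ u ∈ I, 0 < c u)
    (Λ : ℝ → ℝ → ℝ → ℝ → ℝ → ℝ) (hΛ : SmoothOn5 I Λ) :
    (∀ t x : ℝ, ∀ u ∈ I, ∀ v w : ℝ,
      deriv c u * (v * deriv (fun s => Λ t x u s w) v
          + w * deriv (fun s => Λ t x u v s) w - Λ t x u v w)
        = 2 * c u * deriv (fun s => Λ t x s v w) u) ↔
    ∃ f : ℝ → ℝ → ℝ → ℝ → ℝ, Smooth4 f ∧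
      ∀ t x : ℝ, ∀ u ∈ I, ∀ v w : ℝ,
        Λ t x u v w
          = (Real.sqrt (c u))⁻¹
            * f t x (Real.sqrt (c u) * v) (Real.sqrt (c u) * w) := by
  have hcd : ∀ u ∈ I, DifferentiableAt ℝ c u := fun u hu =>
    (hc.contDiffAt (hIo.mem_nhds hu)).differentiableAt (by simp)
  have hΛd := hΛ.differentiableAt_slice hIo
  constructor
  · intro hpde
    rcases I.eq_empty_or_nonempty with rfl | ⟨u₀, hu₀⟩
    · exact ⟨fun _ _ _ _ => 0, contDiff_const, by simp⟩
    refine ⟨fun t x => rescaled c (Λ t x) u₀, hΛ.smooth4_rescaled c hu₀, fun t x u hu v w => ?_⟩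
    have hdefect : ∀ u ∈ I, ∀ v w, defect c (Λ t x) u v w = 0 := fun u hu v w =>
      sub_eq_zero.mpr (hpde t x u hu v w).symm
    dsimp only
    rw [← rescaled_eq_of_defect_eq_zero hIo hIc hcd hcpos (hΛd t x) hdefect hu hu₀,
      rescaled_sqrt_mul (hcpos u hu), inv_mul_cancel_left₀ (Real.sqrt_pos.mpr (hcpos u hu)).ne']
  · rintro ⟨f, -, hf⟩ t x u hu v w
    have hdefect := defect_eq_zero_of_eq_inv_sqrt_mul hIo hcpos (hf t x) hu (hcd u hu)
      (hΛd t x u hu v w)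
    exact (sub_eq_zero.mp hdefect).symm
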